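/- arXiv:1305.2206 — 2 statements merged into one kernel-verified Lean document; each statement's English description precedes it below -/
import Mathlib

section
/- For every set D ⊆ Fin (x−1) and every finite list H of elements of Fin (y+1): there is at most one h ∈ P̃(T,B,D,H) with t(h) = 1 and b(h) = 0, and there is at most one h ∈ P̃(T,B,D,H) with t(h) = 0 and b(h) = 1. -/
/-- The number of east steps of `h` shared with the path `Q` (contacts with `Q`). -/
noncomputable def ccount {x y : ℕ} (Q h : Fin x → Fin (y+1)) : ℕ :=
  Nat.card {j : Fin x // h j = Q j}

/-- The descent set of `h`: positions `j` where the `(j+1)`-st east step is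
strictly higher than the `(j+2)`-nd one, i.e. where south steps occur. -/
def descentSet {x y : ℕ} (h : Fin x → Fin (y+1)) : Set (Fin (x-1)) :=
  {j | h ⟨(j : ℕ) + 1, by have := j.isLt; omega⟩ < h ⟨(j : ℕ), by have := j.isLt; omega⟩}

/-- The non-contact height sequence of `h`: the list of heights of the east steps
of `h` that touch neither `B` nor `T`, in order. -/
def ncseq {x y : ℕ} (T B h : Fin x → Fin (y+1)) : List (Fin (y+1)) :=
  ((List.finRange x).filter fun j => decide (B j < h j ∧ h j < T j)).map h

/-- Key arithmetic lemma for the top-contact case. -/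
lemma key_top (m a b : ℕ) (t f g : ℕ → ℕ) (hab : a < b) (hbm : b ≤ m)
    (hfa : f a = t a) (hfb : f b < t b) (hga : g a < t a) (hgb : g b = t b)
    (hD : ∀ n, n < m → (f (n+1) < f n ↔ g (n+1) < g n))
    (hsh : ∀ n, a ≤ n → n < b → f (n+1) = g n) : False := by
  by_cases hd : g b < g (b-1)
  · have h1 : f b = g (b-1) := by
      have := hsh (b-1) (by omega) (by omega)
      rwa [show b-1+1 = b by omega] at this
    omega
  · have Q : ∀ k, ∀ n, a ≤ n → n < b → b - 1 - n = k → ¬ (g (n+1) < g n) := by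
      intro k
      induction k with
      | zero =>
        intro n h1 h2 h3
        rw [show n + 1 = b by omega, show n = b - 1 by omega]
        exact hd
      | succ k ih =>
        intro n h1 h2 h3
        have ih' := ih (n+1) (by omega) (by omega) (by omega)
        intro hlt
        have e1 : f (n+1) = g n := hsh n h1 h2
        have e2 : f (n+1+1) = g (n+1) := hsh (n+1) (by omega) (by omega)
        exact ih' ((hD (n+1) (by omega)).1 (by omega))
    have Qa := Q (b-1-a) a le_rfl hab rfl
    have hDa := hD a (by omega)
    have e := hsh a le_rfl hab
    omega

/-- Key arithmetic lemma for the bottom-contact case. -/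
lemma key_bot (m a b : ℕ) (bo f g : ℕ → ℕ) (hab : a < b) (hbm : b ≤ m)
    (hfa : f a = bo a) (hgb : g b = bo b) (hfb : bo b < f b)
    (hmono : bo a ≤ bo (a+1)) (hfa1 : bo (a+1) < f (a+1))
    (hD : ∀ n, n < m → (f (n+1) < f n ↔ g (n+1) < g n))
    (hsh : ∀ n, a ≤ n → n < b → f (n+1) = g n) : False := by
  by_cases hd : f (a+1) < f a
  · omega
  · have R : ∀ k, ∀ n, n = a + k → n < b → ¬ (g (n+1) < g n) := by
      intro k
      induction k with
      | zero =>
        intro n h1 h2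
        rw [show n = a by omega]
        exact fun hc => hd ((hD a (by omega)).2 hc)
      | succ k ih =>
        intro n h1 h2
        have ih' := ih (a+k) rfl (by omega)
        have e1 : f (a+k+1) = g (a+k) := hsh (a+k) (by omega) (by omega)
        have e2 : f (a+k+1+1) = g (a+k+1) := hsh (a+k+1) (by omega) (by omega)
        have h3 : ¬ (f (a+k+1+1) < f (a+k+1)) := by omega
        have h4 := fun hc => h3 ((hD (a+k+1) (by omega)).2 hc)
        rw [show n = a + k + 1 by omega]
        exact h4
    have Rb := R (b-1-a) (b-1) (by omega) (by omega)
    have e1 : f b = g (b-1) := by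
      have := hsh (b-1) (by omega) (by omega)
      rwa [show b-1+1 = b by omega] at this
    rw [show b-1+1 = b by omega] at Rb
    omega

lemma filter_ne_eq_map_succAbove (m : ℕ) (j0 : Fin (m+1)) :
    (List.finRange (m+1)).filter (fun j => j ≠ j0) = (List.finRange m).map j0.succAbove := by
  refine (fun hp h1 h2 => List.Perm.eq_of_pairwise (le := (· < ·))
    (fun a b _ _ hab hba => absurd (hab.trans hba) (lt_irrefl _)) h1 h2 hp) ?_ ?_ ?_
  · rw [List.perm_ext_iff_of_nodup ((List.nodup_finRange _).filter _)
      ((List.nodup_finRange _).map Fin.succAbove_right_injective)]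
    intro j
    simp only [List.mem_filter, List.mem_finRange, true_and, List.mem_map, decide_eq_true_eq]
    rw [← Fin.exists_succAbove_eq_iff]
  · exact (List.pairwise_lt_finRange _).filter _
  · exact List.Pairwise.map _ (fun a b hab => Fin.succAbove_lt_succAbove_iff.mpr hab)
      (List.pairwise_lt_finRange _)

lemma ncseq_eq_ofFn {m y : ℕ} (T B h : Fin (m+1) → Fin (y+1)) (j0 : Fin (m+1))
    (hc : ∀ j, (B j < h j ∧ h j < T j) ↔ j ≠ j0) :
    ncseq T B h = List.ofFn (fun i : Fin m => h (j0.succAbove i)) := by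
  unfold ncseq
  rw [List.filter_congr (fun j _ => by
    show decide _ = _
    simp only [decide_eq_decide]
    exact hc j : ∀ j ∈ List.finRange (m+1),
      (fun j => decide (B j < h j ∧ h j < T j)) j = (fun j => decide (j ≠ j0)) j)]
  rw [show (fun j : Fin (m+1) => decide (j ≠ j0)) = (fun j : Fin (m+1) => j ≠ j0) from rfl,
    filter_ne_eq_map_succAbove, List.map_map, List.ofFn_eq_map]
  rfl

lemma succAbove_val_lt {m : ℕ} (p : Fin (m+1)) (i : Fin m) (h : (i:ℕ) < (p:ℕ)) :
    p.succAbove i = ⟨(i:ℕ), by omega⟩ := by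
  rw [Fin.succAbove_of_castSucc_lt _ _ (by simpa [Fin.lt_def] using h)]
  rfl

lemma succAbove_val_ge {m : ℕ} (p : Fin (m+1)) (i : Fin m) (h : (p:ℕ) ≤ (i:ℕ)) :
    p.succAbove i = ⟨(i:ℕ)+1, by omega⟩ := by
  rw [Fin.succAbove_of_le_castSucc _ _ (by simpa [Fin.le_def] using h)]
  rfl

/-- The natural-number valued version of a path. -/
def natv {m y : ℕ} (h : Fin (m+1) → Fin (y+1)) : ℕ → ℕ :=
  fun n => if hn : n < m+1 then (h ⟨n, hn⟩ : ℕ) else 0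

lemma natv_eq {m y : ℕ} (h : Fin (m+1) → Fin (y+1)) (n : ℕ) (hn : n < m+1) :
    natv h n = h ⟨n, hn⟩ := dif_pos hn

lemma contact_structure {x y : ℕ} (Q h : Fin x → Fin (y+1)) (h1 : ccount Q h = 1) :
    ∃ j0, h j0 = Q j0 ∧ ∀ j, h j = Q j → j = j0 := by
  obtain ⟨hsub, ⟨⟨j0, hj0⟩⟩⟩ := Nat.card_eq_one_iff_unique.mp h1
  exact ⟨j0, hj0, fun j hj => congrArg Subtype.val (hsub.allEq ⟨j, hj⟩ ⟨j0, hj0⟩)⟩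

lemma no_contact {x y : ℕ} (Q h : Fin x → Fin (y+1)) (h0 : ccount Q h = 0) :
    ∀ j, h j ≠ Q j := by
  intro j hj
  rcases Nat.card_eq_zero.mp h0 with he | hi
  · exact he.false ⟨j, hj⟩
  · exact not_finite {j : Fin x // h j = Q j}

lemma eq_top {x y : ℕ} (T B : Fin x → Fin (y+1)) (h h' : Fin x → Fin (y+1))
    (hbd : ∀ j, B j ≤ h j ∧ h j ≤ T j) (hbd' : ∀ j, B j ≤ h' j ∧ h' j ≤ T j)
    (hdesc : descentSet h = descentSet h')
    (hseq : ncseq T B h = ncseq T B h')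
    (ht : ccount T h = 1) (hb : ccount B h = 0)
    (ht' : ccount T h' = 1) (hb' : ccount B h' = 0) : h = h' := by
  obtain ⟨j0, hj0, huniq⟩ := contact_structure T h ht
  obtain ⟨j0', hj0', huniq'⟩ := contact_structure T h' ht'
  have hBlt : ∀ j, B j < h j :=
    fun j => lt_of_le_of_ne (hbd j).1 (fun e => no_contact B h hb j e.symm)
  have hBlt' : ∀ j, B j < h' j :=
    fun j => lt_of_le_of_ne (hbd' j).1 (fun e => no_contact B h' hb' j e.symm)
  have hTlt : ∀ j, j ≠ j0 → h j < T j :=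
    fun j hj => lt_of_le_of_ne (hbd j).2 (fun e => hj (huniq j e))
  have hTlt' : ∀ j, j ≠ j0' → h' j < T j :=
    fun j hj => lt_of_le_of_ne (hbd' j).2 (fun e => hj (huniq' j e))
  obtain ⟨m, rfl⟩ : ∃ m, x = m + 1 := ⟨x - 1, by have := j0.isLt; omega⟩
  have hc : ∀ j, (B j < h j ∧ h j < T j) ↔ j ≠ j0 := fun j =>
    ⟨fun hh e => absurd hj0 (by rw [← e]; exact ne_of_lt hh.2), fun hne => ⟨hBlt j, hTlt j hne⟩⟩
  have hc' : ∀ j, (B j < h' j ∧ h' j < T j) ↔ j ≠ j0' := fun j =>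
    ⟨fun hh e => absurd hj0' (by rw [← e]; exact ne_of_lt hh.2), fun hne => ⟨hBlt' j, hTlt' j hne⟩⟩
  rw [ncseq_eq_ofFn T B h j0 hc, ncseq_eq_ofFn T B h' j0' hc'] at hseq
  have hfun := List.ofFn_inj.mp hseq
  have hD : ∀ n (hn1 : n+1 < m+1) (hn2 : n < m+1),
      (h ⟨n+1, hn1⟩ < h ⟨n, hn2⟩ ↔ h' ⟨n+1, hn1⟩ < h' ⟨n, hn2⟩) := by
    intro n hn1 hn2
    have := Set.ext_iff.mp hdesc ⟨n, by omega⟩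
    simpa [descentSet, Set.mem_setOf_eq] using this
  have hDn : ∀ n, n < m → (natv h (n+1) < natv h n ↔ natv h' (n+1) < natv h' n) := by
    intro n hn
    rw [natv_eq h (n+1) (by omega), natv_eq h n (by omega),
      natv_eq h' (n+1) (by omega), natv_eq h' n (by omega)]
    rw [← Fin.lt_def, ← Fin.lt_def]
    exact hD n (by omega) (by omega)
  rcases lt_trichotomy j0 j0' with hlt | heq | hgt
  · exfalso
    have hab : (j0:ℕ) < (j0':ℕ) := hlt
    refine key_top m (j0:ℕ) (j0':ℕ) (natv T) (natv h) (natv h') hab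
      (by have := j0'.isLt; omega) ?_ ?_ ?_ ?_ hDn ?_
    · rw [natv_eq h _ j0.isLt, natv_eq T _ j0.isLt, Fin.eta]
      exact congrArg Fin.val hj0
    · rw [natv_eq h _ j0'.isLt, natv_eq T _ j0'.isLt, Fin.eta]
      exact hTlt j0' (Fin.ne_of_gt hlt)
    · rw [natv_eq h' _ j0.isLt, natv_eq T _ j0.isLt, Fin.eta]
      exact hTlt' j0 (Fin.ne_of_lt hlt)
    · rw [natv_eq h' _ j0'.isLt, natv_eq T _ j0'.isLt, Fin.eta]
      exact congrArg Fin.val hj0'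
    · intro n h1 h2
      have hnm : n < m := by have := j0'.isLt; omega
      have := congrFun hfun ⟨n, hnm⟩
      rw [succAbove_val_ge j0 ⟨n, hnm⟩ h1, succAbove_val_lt j0' ⟨n, hnm⟩ h2] at this
      rw [natv_eq h (n+1) (by omega), natv_eq h' n (by omega)]
      exact congrArg Fin.val this
  · subst heq
    funext j
    by_cases hj : j = j0
    · rw [hj, hj0, ← hj0']
    · obtain ⟨i, hi⟩ := Fin.exists_succAbove_eq hj
      rw [← hi]
      exact congrFun hfun i
  · exfalso
    have hab : (j0':ℕ) < (j0:ℕ) := hgt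
    refine key_top m (j0':ℕ) (j0:ℕ) (natv T) (natv h') (natv h) hab
      (by have := j0.isLt; omega) ?_ ?_ ?_ ?_ (fun n hn => (hDn n hn).symm) ?_
    · rw [natv_eq h' _ j0'.isLt, natv_eq T _ j0'.isLt, Fin.eta]
      exact congrArg Fin.val hj0'
    · rw [natv_eq h' _ j0.isLt, natv_eq T _ j0.isLt, Fin.eta]
      exact hTlt' j0 (Fin.ne_of_gt hgt)
    · rw [natv_eq h _ j0'.isLt, natv_eq T _ j0'.isLt, Fin.eta]
      exact hTlt j0' (Fin.ne_of_lt hgt)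
    · rw [natv_eq h _ j0.isLt, natv_eq T _ j0.isLt, Fin.eta]
      exact congrArg Fin.val hj0
    · intro n h1 h2
      have hnm : n < m := by have := j0.isLt; omega
      have := congrFun hfun ⟨n, hnm⟩
      rw [succAbove_val_lt j0 ⟨n, hnm⟩ h2, succAbove_val_ge j0' ⟨n, hnm⟩ h1] at this
      rw [natv_eq h' (n+1) (by omega), natv_eq h n (by omega)]
      exact (congrArg Fin.val this).symm

lemma eq_bot {x y : ℕ} (T B : Fin x → Fin (y+1)) (hB : Monotone B)
    (h h' : Fin x → Fin (y+1))
    (hbd : ∀ j, B j ≤ h j ∧ h j ≤ T j) (hbd' : ∀ j, B j ≤ h' j ∧ h' j ≤ T j)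
    (hdesc : descentSet h = descentSet h')
    (hseq : ncseq T B h = ncseq T B h')
    (ht : ccount T h = 0) (hb : ccount B h = 1)
    (ht' : ccount T h' = 0) (hb' : ccount B h' = 1) : h = h' := by
  obtain ⟨j0, hj0, huniq⟩ := contact_structure B h hb
  obtain ⟨j0', hj0', huniq'⟩ := contact_structure B h' hb'
  have hTlt : ∀ j, h j < T j :=
    fun j => lt_of_le_of_ne (hbd j).2 (fun e => no_contact T h ht j e)
  have hTlt' : ∀ j, h' j < T j :=
    fun j => lt_of_le_of_ne (hbd' j).2 (fun e => no_contact T h' ht' j e)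
  have hBlt : ∀ j, j ≠ j0 → B j < h j :=
    fun j hj => lt_of_le_of_ne (hbd j).1 (fun e => hj (huniq j e.symm))
  have hBlt' : ∀ j, j ≠ j0' → B j < h' j :=
    fun j hj => lt_of_le_of_ne (hbd' j).1 (fun e => hj (huniq' j e.symm))
  obtain ⟨m, rfl⟩ : ∃ m, x = m + 1 := ⟨x - 1, by have := j0.isLt; omega⟩
  have hc : ∀ j, (B j < h j ∧ h j < T j) ↔ j ≠ j0 := fun j =>
    ⟨fun hh e => absurd hj0 (by rw [← e]; exact (ne_of_lt hh.1).symm),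
     fun hne => ⟨hBlt j hne, hTlt j⟩⟩
  have hc' : ∀ j, (B j < h' j ∧ h' j < T j) ↔ j ≠ j0' := fun j =>
    ⟨fun hh e => absurd hj0' (by rw [← e]; exact (ne_of_lt hh.1).symm),
     fun hne => ⟨hBlt' j hne, hTlt' j⟩⟩
  rw [ncseq_eq_ofFn T B h j0 hc, ncseq_eq_ofFn T B h' j0' hc'] at hseq
  have hfun := List.ofFn_inj.mp hseq
  have hD : ∀ n (hn1 : n+1 < m+1) (hn2 : n < m+1),
      (h ⟨n+1, hn1⟩ < h ⟨n, hn2⟩ ↔ h' ⟨n+1, hn1⟩ < h' ⟨n, hn2⟩) := by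
    intro n hn1 hn2
    have := Set.ext_iff.mp hdesc ⟨n, by omega⟩
    simpa [descentSet, Set.mem_setOf_eq] using this
  have hDn : ∀ n, n < m → (natv h (n+1) < natv h n ↔ natv h' (n+1) < natv h' n) := by
    intro n hn
    rw [natv_eq h (n+1) (by omega), natv_eq h n (by omega),
      natv_eq h' (n+1) (by omega), natv_eq h' n (by omega)]
    rw [← Fin.lt_def, ← Fin.lt_def]
    exact hD n (by omega) (by omega)
  rcases lt_trichotomy j0 j0' with hlt | heq | hgt
  · exfalso
    have hab : (j0:ℕ) < (j0':ℕ) := hlt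
    have ha1 : (j0:ℕ)+1 < m+1 := by have := j0'.isLt; omega
    refine key_bot m (j0:ℕ) (j0':ℕ) (natv B) (natv h) (natv h') hab
      (by have := j0'.isLt; omega) ?_ ?_ ?_ ?_ ?_ hDn ?_
    · rw [natv_eq h _ j0.isLt, natv_eq B _ j0.isLt, Fin.eta]
      exact congrArg Fin.val hj0
    · rw [natv_eq h' _ j0'.isLt, natv_eq B _ j0'.isLt, Fin.eta]
      exact congrArg Fin.val hj0'
    · rw [natv_eq h _ j0'.isLt, natv_eq B _ j0'.isLt, Fin.eta]
      exact hBlt j0' (Fin.ne_of_gt hlt)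
    · rw [natv_eq B _ j0.isLt, natv_eq B _ ha1, Fin.eta]
      exact hB (by rw [Fin.le_def]; simp)
    · rw [natv_eq h _ ha1, natv_eq B _ ha1]
      exact hBlt ⟨(j0:ℕ)+1, ha1⟩ (Fin.ne_of_val_ne (by simp))
    · intro n h1 h2
      have hnm : n < m := by have := j0'.isLt; omega
      have := congrFun hfun ⟨n, hnm⟩
      rw [succAbove_val_ge j0 ⟨n, hnm⟩ h1, succAbove_val_lt j0' ⟨n, hnm⟩ h2] at this
      rw [natv_eq h (n+1) (by omega), natv_eq h' n (by omega)]
      exact congrArg Fin.val this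
  · subst heq
    funext j
    by_cases hj : j = j0
    · rw [hj, hj0, ← hj0']
    · obtain ⟨i, hi⟩ := Fin.exists_succAbove_eq hj
      rw [← hi]
      exact congrFun hfun i
  · exfalso
    have hab : (j0':ℕ) < (j0:ℕ) := hgt
    have ha1 : (j0':ℕ)+1 < m+1 := by have := j0.isLt; omega
    refine key_bot m (j0':ℕ) (j0:ℕ) (natv B) (natv h') (natv h) hab
      (by have := j0.isLt; omega) ?_ ?_ ?_ ?_ ?_ (fun n hn => (hDn n hn).symm) ?_
    · rw [natv_eq h' _ j0'.isLt, natv_eq B _ j0'.isLt, Fin.eta]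
      exact congrArg Fin.val hj0'
    · rw [natv_eq h _ j0.isLt, natv_eq B _ j0.isLt, Fin.eta]
      exact congrArg Fin.val hj0
    · rw [natv_eq h' _ j0.isLt, natv_eq B _ j0.isLt, Fin.eta]
      exact hBlt' j0 (Fin.ne_of_gt hgt)
    · rw [natv_eq B _ j0'.isLt, natv_eq B _ ha1, Fin.eta]
      exact hB (by rw [Fin.le_def]; simp)
    · rw [natv_eq h' _ ha1, natv_eq B _ ha1]
      exact hBlt' ⟨(j0':ℕ)+1, ha1⟩ (Fin.ne_of_val_ne (by simp))
    · intro n h1 h2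
      have hnm : n < m := by have := j0.isLt; omega
      have := congrFun hfun ⟨n, hnm⟩
      rw [succAbove_val_lt j0 ⟨n, hnm⟩ h2, succAbove_val_ge j0' ⟨n, hnm⟩ h1] at this
      rw [natv_eq h' (n+1) (by omega), natv_eq h n (by omega)]
      exact (congrArg Fin.val this).symm

/-- In `P̃(T,B,D,H)` there is at most one path with `t = 1, b = 0`, and at most
one path with `t = 0, b = 1`. -/
theorem stmt7 {x y : ℕ} (T B : Fin x → Fin (y+1))
    (hT : Monotone T) (hB : Monotone B) (hTB : ∀ j, B j ≤ T j)
    (D : Set (Fin (x-1))) (H : List (Fin (y+1))) :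
    Nat.card {h : Fin x → Fin (y+1) // (∀ j, B j ≤ h j ∧ h j ≤ T j) ∧
        descentSet h = D ∧ ncseq T B h = H ∧ ccount T h = 1 ∧ ccount B h = 0} ≤ 1 ∧
    Nat.card {h : Fin x → Fin (y+1) // (∀ j, B j ≤ h j ∧ h j ≤ T j) ∧
        descentSet h = D ∧ ncseq T B h = H ∧ ccount T h = 0 ∧ ccount B h = 1} ≤ 1 := by
  constructor
  · refine Finite.card_le_one_iff_subsingleton.mpr ⟨?_⟩
    rintro ⟨h, hbd, hd, hs, h1, h2⟩ ⟨h', hbd', hd', hs', h1', h2'⟩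
    exact Subtype.ext (eq_top T B h h' hbd hbd' (hd.trans hd'.symm) (hs.trans hs'.symm)
      h1 h2 h1' h2')
  · refine Finite.card_le_one_iff_subsingleton.mpr ⟨?_⟩
    rintro ⟨h, hbd, hd, hs, h1, h2⟩ ⟨h', hbd', hd', hs', h1', h2'⟩
    exact Subtype.ext (eq_bot T B hB h h' hbd hbd' (hd.trans hd'.symm) (hs.trans hs'.symm)
      h1 h2 h1' h2')
end

section
/- Let n ≥ 1, x = y = n, T j = n for all j ∈ Fin n (the boundary T = N^n E^n), and B j = j + 1 for all j ∈ Fin n (the staircase boundary whose (j+1)-st east step has height j+1). Then for every D ⊆ {1,…,n−1} and all natural numbers e, f: the number of permutations π of {1,…,n} with exactly e right-to-left minima, exactly f right-to-left maxima, and whose set of occurrence positions of the pattern 13-2 equals D, is equal to the number of h ∈ P̃(T,B) with t(h) = e, b(h) = f, and descent set equal to D under the identification of i ∈ D with a descent between the i-th and (i+1)-st east steps of h. -/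
/-- The number of right-to-left minima of a permutation `π` of `{1,…,n}`
(identified with `Fin n`). -/
noncomputable def rlMinCount (n : ℕ) (π : Equiv.Perm (Fin n)) : ℕ :=
  Nat.card {i : Fin n // ∀ j : Fin n, i < j → π i < π j}

/-- The number of right-to-left maxima of a permutation `π` of `{1,…,n}`. -/
noncomputable def rlMaxCount (n : ℕ) (π : Equiv.Perm (Fin n)) : ℕ :=
  Nat.card {i : Fin n // ∀ j : Fin n, i < j → π j < π i}

/-- The set of positions `i ∈ {1,…,n-1}` (encoded by `i-1 : Fin (n-1)`) where
`π` has an occurrence of the dashed pattern 13-2, i.e. there is `j > i+1` with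
`π(i) < π(j) < π(i+1)`. -/
def occSet (n : ℕ) (π : Equiv.Perm (Fin n)) : Set (Fin (n-1)) :=
  {i | ∃ j : Fin n, (i : ℕ) + 1 < (j : ℕ) ∧
    π ⟨(i : ℕ), by have := i.isLt; omega⟩ < π j ∧
    π j < π ⟨(i : ℕ) + 1, by have := i.isLt; omega⟩}

namespace Stmt12Aux

variable {n : ℕ}

/-- right-to-left code: number of later positions with smaller values. -/
def code (π : Equiv.Perm (Fin n)) (j : Fin n) : ℕ :=
  ((Finset.Ioi j).filter (fun i => π i < π j)).card

lemma mem_Ioi_fin {a b : Fin n} : a ∈ Finset.Ioi b ↔ (b : ℕ) < (a : ℕ) := by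
  rw [Finset.mem_Ioi, Fin.lt_def]

lemma code_le (π : Equiv.Perm (Fin n)) (j : Fin n) : code π j ≤ n - 1 - j := by
  calc code π j ≤ (Finset.Ioi j).card := Finset.card_filter_le _ _
    _ = n - 1 - j := Fin.card_Ioi j

def phi (π : Equiv.Perm (Fin n)) : Fin n → Fin (n+1) :=
  fun j => ⟨n - code π j, by omega⟩

lemma phi_val (π : Equiv.Perm (Fin n)) (j : Fin n) : (phi π j : ℕ) = n - code π j := rfl

lemma code_eq_image (π : Equiv.Perm (Fin n)) (j : Fin n) :
    code π j = (((Finset.Ici j).image π).filter (· < π j)).card := by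
  rw [Finset.filter_image]
  rw [Finset.card_image_of_injective _ π.injective]
  have : (Finset.Ici j).filter (fun a => π a < π j)
      = (Finset.Ioi j).filter (fun a => π a < π j) := by
    ext i
    simp only [Finset.mem_filter, Finset.mem_Ici, Finset.mem_Ioi]
    constructor
    · rintro ⟨hle, hlt⟩
      refine ⟨lt_of_le_of_ne hle ?_, hlt⟩
      rintro rfl; exact absurd hlt (lt_irrefl _)
    · rintro ⟨hlt, h⟩; exact ⟨le_of_lt hlt, h⟩
  rw [this, code]

lemma phi_injective : Function.Injective (phi (n := n)) := by
  intro π σ hps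
  have hcode : ∀ j, code π j = code σ j := by
    intro j
    have h1 := code_le π j
    have h2 := code_le σ j
    have h3 := j.isLt
    have := congrFun hps j
    have := congrArg Fin.val this
    simp only [phi_val] at this
    omega
  have key : ∀ m : ℕ, ∀ j : Fin n, (j : ℕ) = m → π j = σ j := by
    intro m
    induction m using Nat.strong_induction_on with
    | _ m ih =>
      intro j hj
      by_contra hne
      have hpre : ∀ i : Fin n, i < j → π i = σ i := by
        intro i hi
        exact ih (i : ℕ) (by rw [← hj]; exact hi) i rfl
      -- suffix images are equal
      have hsymm : ∀ v : Fin n, π.symm v < j ↔ σ.symm v < j := by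
        intro v
        constructor
        · intro hv
          have : σ (π.symm v) = v := by rw [← hpre _ hv, Equiv.apply_symm_apply]
          have := congrArg σ.symm this
          rw [Equiv.symm_apply_apply] at this
          rwa [← this]
        · intro hv
          have : π (σ.symm v) = v := by rw [hpre _ hv, Equiv.apply_symm_apply]
          have := congrArg π.symm this
          rw [Equiv.symm_apply_apply] at this
          rwa [← this]
      have himg : (Finset.Ici j).image π = (Finset.Ici j).image σ := by
        ext v
        simp only [Finset.mem_image, Finset.mem_Ici]
        constructor
        · rintro ⟨i, hi, rfl⟩
          refine ⟨σ.symm (π i), ?_, Equiv.apply_symm_apply _ _⟩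
          have h1 : ¬ π.symm (π i) < j := by
            rw [Equiv.symm_apply_apply]; exact not_lt.mpr hi
          have h2 := (hsymm (π i)).not.mp h1
          exact not_lt.mp h2
        · rintro ⟨i, hi, rfl⟩
          refine ⟨π.symm (σ i), ?_, Equiv.apply_symm_apply _ _⟩
          have h1 : ¬ σ.symm (σ i) < j := by
            rw [Equiv.symm_apply_apply]; exact not_lt.mpr hi
          have h2 := (hsymm (σ i)).not.mpr h1
          exact not_lt.mp h2
      -- derive contradiction from distinct values with same code
      have main : ∀ (a b : Equiv.Perm (Fin n)),
          (Finset.Ici j).image a = (Finset.Ici j).image b → a j < b j →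
          code a j < code b j := by
        intro a b himg' hab
        rw [code_eq_image a j, code_eq_image b j, himg']
        apply Finset.card_lt_card
        constructor
        · intro v hv
          obtain ⟨hvS, hvlt⟩ := Finset.mem_filter.mp hv
          exact Finset.mem_filter.mpr ⟨hvS, lt_trans hvlt hab⟩
        · intro hsub
          have haj : a j ∈ ((Finset.Ici j).image b).filter (· < b j) := by
            rw [← himg']
            refine Finset.mem_filter.mpr ⟨?_, hab⟩
            exact Finset.mem_image_of_mem a (Finset.mem_Ici.mpr le_rfl)
          have := hsub haj
          have := (Finset.mem_filter.mp this).2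
          exact absurd this (lt_irrefl _)
      rcases lt_trichotomy (π j) (σ j) with h | h | h
      · exact absurd (hcode j) (Nat.ne_of_lt (main π σ himg h))
      · exact hne h
      · exact absurd (hcode j).symm (Nat.ne_of_lt (main σ π himg.symm h))
  exact Equiv.ext fun j => key (j : ℕ) j rfl

/-- bounds for phi -/
lemma phi_bounds (π : Equiv.Perm (Fin n)) (j : Fin n) :
    (j : ℕ) + 1 ≤ (phi π j : ℕ) ∧ (phi π j : ℕ) ≤ n := by
  have h1 := code_le π j
  have h2 := j.isLt
  rw [phi_val]
  omega

/-- top contacts ↔ rl minima -/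
lemma phi_top_iff (π : Equiv.Perm (Fin n)) (j : Fin n) :
    (phi π j : ℕ) = n ↔ ∀ i : Fin n, j < i → π j < π i := by
  have h1 := code_le π j
  have h2 := j.isLt
  rw [phi_val]
  have hz : n - code π j = n ↔ code π j = 0 := by omega
  rw [hz, code, Finset.card_eq_zero, Finset.filter_eq_empty_iff]
  constructor
  · intro H i hi
    have := H (Finset.mem_Ioi.mpr hi)
    have hne : π j ≠ π i := fun he => (ne_of_lt hi) (π.injective he)
    exact lt_of_le_of_ne (not_lt.mp this) hne
  · intro H i hi
    exact not_lt.mpr (le_of_lt (H i (Finset.mem_Ioi.mp hi)))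

/-- bottom contacts ↔ rl maxima -/
lemma phi_bot_iff (π : Equiv.Perm (Fin n)) (j : Fin n) :
    (phi π j : ℕ) = (j : ℕ) + 1 ↔ ∀ i : Fin n, j < i → π i < π j := by
  have h1 := code_le π j
  have h2 := j.isLt
  rw [phi_val]
  have hz : n - code π j = (j : ℕ) + 1 ↔ code π j = n - 1 - (j : ℕ) := by omega
  rw [hz]
  constructor
  · intro H i hi
    have hfull : ((Finset.Ioi j).filter (fun i => π i < π j)) = Finset.Ioi j := by
      apply Finset.eq_of_subset_of_card_le (Finset.filter_subset _ _)
      rw [Fin.card_Ioi]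
      exact le_of_eq H.symm
    have : i ∈ ((Finset.Ioi j).filter (fun i => π i < π j)) := by
      rw [hfull]; exact Finset.mem_Ioi.mpr hi
    exact (Finset.mem_filter.mp this).2
  · intro H
    rw [code, Finset.filter_true_of_mem (fun i hi => H i (Finset.mem_Ioi.mp hi)),
      Fin.card_Ioi]

/-- descents ↔ 13-2 occurrences -/
lemma code_lt_iff (π : Equiv.Perm (Fin n)) (j : ℕ) (hj : j + 1 < n) (h0 : j < n) :
    code π ⟨j, h0⟩ < code π ⟨j+1, hj⟩ ↔
      ∃ i : Fin n, j + 1 < (i : ℕ) ∧ π ⟨j, h0⟩ < π i ∧ π i < π ⟨j+1, hj⟩ := by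
  set j0 : Fin n := ⟨j, h0⟩ with hj0
  set j1 : Fin n := ⟨j+1, hj⟩ with hj1
  have hv0 : (j0 : ℕ) = j := rfl
  have hv1 : (j1 : ℕ) = j + 1 := rfl
  constructor
  · intro hlt
    by_contra hno
    push_neg at hno
    have hsub : (Finset.Ioi j1).filter (fun i => π i < π j1) ⊆
        (Finset.Ioi j0).filter (fun i => π i < π j0) := by
      intro i hi
      obtain ⟨hi1, hi2⟩ := Finset.mem_filter.mp hi
      have hii : (j1 : ℕ) < (i : ℕ) := mem_Ioi_fin.mp hi1
      have h3 := hno i (by omega)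
      have hlt0 : π i < π j0 := by
        by_contra hge
        have hne : π j0 ≠ π i := by
          intro he
          have : j0 = i := π.injective he
          have : (j0 : ℕ) = (i : ℕ) := congrArg Fin.val this
          omega
        have : π j0 < π i := lt_of_le_of_ne (not_lt.mp hge) hne
        exact absurd hi2 (not_lt.mpr (h3 this))
      exact Finset.mem_filter.mpr ⟨mem_Ioi_fin.mpr (by omega), hlt0⟩
    have := Finset.card_le_card hsub
    rw [code, code] at hlt
    omega
  · rintro ⟨i, hii, h1, h2⟩
    rw [code, code]
    apply Finset.card_lt_card
    constructor
    · intro a ha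
      obtain ⟨ha1, ha2⟩ := Finset.mem_filter.mp ha
      have ha1' : (j0 : ℕ) < (a : ℕ) := mem_Ioi_fin.mp ha1
      have hane : (a : ℕ) ≠ j + 1 := by
        intro he
        have : a = j1 := Fin.ext he
        rw [this] at ha2
        exact absurd (lt_trans ha2 (lt_trans h1 h2)) (lt_irrefl _)
      exact Finset.mem_filter.mpr
        ⟨mem_Ioi_fin.mpr (by omega), lt_trans ha2 (lt_trans h1 h2)⟩
    · intro hsub
      have hiB : i ∈ (Finset.Ioi j1).filter (fun a => π a < π j1) :=
        Finset.mem_filter.mpr ⟨mem_Ioi_fin.mpr (by omega), h2⟩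
      have := (Finset.mem_filter.mp (hsub hiB)).2
      exact absurd (lt_trans h1 this) (lt_irrefl _)

lemma phi_descent_iff (π : Equiv.Perm (Fin n)) (j : ℕ) (hj : j + 1 < n) (h0 : j < n) :
    phi π ⟨j+1, hj⟩ < phi π ⟨j, h0⟩ ↔
      ∃ i : Fin n, j + 1 < (i : ℕ) ∧ π ⟨j, h0⟩ < π i ∧ π i < π ⟨j+1, hj⟩ := by
  rw [Fin.lt_def, phi_val, phi_val]
  have c0 := code_le π ⟨j, h0⟩
  have c1 := code_le π ⟨j+1, hj⟩
  rw [show ((⟨j, h0⟩ : Fin n) : ℕ) = j from rfl] at c0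
  rw [show ((⟨j+1, hj⟩ : Fin n) : ℕ) = j+1 from rfl] at c1
  have key := code_lt_iff π j hj h0
  constructor
  · intro h
    apply key.mp
    omega
  · intro h
    have := key.mpr h
    omega

/-- cardinality of the set of bounded paths -/
lemma card_paths (n : ℕ) :
    Fintype.card {h : Fin n → Fin (n+1) //
      ∀ j : Fin n, (j : ℕ) + 1 ≤ (h j : ℕ) ∧ (h j : ℕ) ≤ n} = n.factorial := by
  rw [Fintype.card_congr
    (Equiv.subtypePiEquivPi (p := fun (j : Fin n) (v : Fin (n+1)) =>
      (j : ℕ) + 1 ≤ (v : ℕ) ∧ (v : ℕ) ≤ n))]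
  rw [Fintype.card_pi]
  have hcard : ∀ j : Fin n,
      Fintype.card {v : Fin (n+1) // (j : ℕ) + 1 ≤ (v : ℕ) ∧ (v : ℕ) ≤ n} = n - j := by
    intro j
    have hj := j.isLt
    rw [Fintype.card_subtype]
    have : (Finset.univ.filter fun v : Fin (n+1) => (j : ℕ) + 1 ≤ (v : ℕ) ∧ (v : ℕ) ≤ n)
        = Finset.Icc ⟨(j : ℕ) + 1, by omega⟩ ⟨n, by omega⟩ := by
      ext v
      simp [Finset.mem_Icc, Fin.le_def]
    rw [this, Fin.card_Icc]
    show n + 1 - ((j : ℕ) + 1) = n - (j : ℕ)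
    omega
  rw [Finset.prod_congr rfl (fun j _ => hcard j)]
  rw [Fin.prod_univ_eq_prod_range (fun j => n - j) n]
  rw [← Finset.prod_range_reflect]
  have : ∀ j ∈ Finset.range n, n - (n - 1 - j) = j + 1 := by
    intro j hj
    simp only [Finset.mem_range] at hj
    omega
  rw [Finset.prod_congr rfl this]
  exact Finset.prod_range_add_one_eq_factorial n

def phi' (n : ℕ) : Equiv.Perm (Fin n) →
    {h : Fin n → Fin (n+1) // ∀ j : Fin n, (j : ℕ) + 1 ≤ (h j : ℕ) ∧ (h j : ℕ) ≤ n} :=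
  fun π => ⟨phi π, phi_bounds π⟩

lemma phi'_bijective (n : ℕ) : Function.Bijective (phi' n) := by
  rw [Fintype.bijective_iff_injective_and_card]
  constructor
  · intro π σ h
    exact phi_injective (congrArg Subtype.val h)
  · rw [card_paths, Fintype.card_perm, Fintype.card_fin]

end Stmt12Aux


/-- Permutations of `{1,…,n}` with `e` right-to-left minima, `f` right-to-left
maxima, and occurrences of 13-2 exactly at the positions of `D` are
equinumerous with paths in `P̃(T,B)` (for `T = N^n E^n` and `B` the staircase)
with `t = e`, `b = f` and descent set `D`. -/
theorem stmt12 (n : ℕ) (hn : 1 ≤ n) (T B : Fin n → Fin (n+1))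
    (hT : ∀ j, (T j : ℕ) = n) (hB : ∀ j, (B j : ℕ) = (j : ℕ) + 1)
    (D : Set (Fin (n-1))) (e f : ℕ) :
    Nat.card {π : Equiv.Perm (Fin n) //
        rlMinCount n π = e ∧ rlMaxCount n π = f ∧ occSet n π = D}
    = Nat.card {h : Fin n → Fin (n+1) // (∀ j, B j ≤ h j ∧ h j ≤ T j) ∧
        ccount T h = e ∧ ccount B h = f ∧ descentSet h = D} := by
  have key : ∀ π : Equiv.Perm (Fin n),
      (rlMinCount n π = e ∧ rlMaxCount n π = f ∧ occSet n π = D) ↔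
        (ccount T (Stmt12Aux.phi π) = e ∧ ccount B (Stmt12Aux.phi π) = f ∧
          descentSet (Stmt12Aux.phi π) = D) := by
    intro π
    have h1 : ccount T (Stmt12Aux.phi π) = rlMinCount n π := by
      unfold ccount rlMinCount
      apply Nat.card_congr
      apply Equiv.subtypeEquivRight
      intro j
      rw [Fin.ext_iff, hT j]
      exact Stmt12Aux.phi_top_iff π j
    have h2 : ccount B (Stmt12Aux.phi π) = rlMaxCount n π := by
      unfold ccount rlMaxCount
      apply Nat.card_congr
      apply Equiv.subtypeEquivRight
      intro j
      rw [Fin.ext_iff, hB j]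
      exact Stmt12Aux.phi_bot_iff π j
    have h3 : descentSet (Stmt12Aux.phi π) = occSet n π := by
      ext j
      have hj : (j : ℕ) + 1 < n := by have := j.isLt; omega
      simp only [descentSet, occSet, Set.mem_setOf_eq]
      exact Stmt12Aux.phi_descent_iff π (j : ℕ) hj (by omega)
    rw [h1, h2, h3]
  calc Nat.card {π : Equiv.Perm (Fin n) //
          rlMinCount n π = e ∧ rlMaxCount n π = f ∧ occSet n π = D}
      = Nat.card {h' : {h : Fin n → Fin (n+1) //
            ∀ j : Fin n, (j : ℕ) + 1 ≤ (h j : ℕ) ∧ (h j : ℕ) ≤ n} //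
          ccount T h'.1 = e ∧ ccount B h'.1 = f ∧ descentSet h'.1 = D} := by
        apply Nat.card_congr
        exact Equiv.subtypeEquiv (Equiv.ofBijective _ (Stmt12Aux.phi'_bijective n))
          (fun π => key π)
    _ = Nat.card {h : Fin n → Fin (n+1) //
          (∀ j : Fin n, (j : ℕ) + 1 ≤ (h j : ℕ) ∧ (h j : ℕ) ≤ n) ∧
          (ccount T h = e ∧ ccount B h = f ∧ descentSet h = D)} := by
        apply Nat.card_congr
        exact Equiv.subtypeSubtypeEquivSubtypeInter
          (fun h : Fin n → Fin (n+1) =>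
            ∀ j : Fin n, (j : ℕ) + 1 ≤ (h j : ℕ) ∧ (h j : ℕ) ≤ n)
          (fun h => ccount T h = e ∧ ccount B h = f ∧ descentSet h = D)
    _ = Nat.card {h : Fin n → Fin (n+1) // (∀ j, B j ≤ h j ∧ h j ≤ T j) ∧
          ccount T h = e ∧ ccount B h = f ∧ descentSet h = D} := by
        apply Nat.card_congr
        apply Equiv.subtypeEquivRight
        intro h
        constructor
        · rintro ⟨hb, hs⟩
          refine ⟨fun j => ⟨?_, ?_⟩, hs⟩
          · rw [Fin.le_def, hB j]; exact (hb j).1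
          · rw [Fin.le_def, hT j]; exact (hb j).2
        · rintro ⟨hb, hs⟩
          refine ⟨fun j => ⟨?_, ?_⟩, hs⟩
          · have := (hb j).1; rw [Fin.le_def, hB j] at this; exact this
          · have := (hb j).2; rw [Fin.le_def, hT j] at this; exact this
end
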